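/- Let n ≥ 3 and N = 2^n. Then there are at least ⌊(N−2)/3⌋ + 3 pairs (l, r) with 0 ≤ l < N and 1 ≤ r < N such that the periodic state Ψ^n_{l,r} is SLOCC-equivalent to GHZ_n; namely the pair (1,1), the pair (N/2−1, 1), and the ⌊(N−2)/3⌋ + 1 pairs (k, N−1−2k) for 0 ≤ k ≤ ⌊(N−2)/3⌋ on the anti-diagonal 2l + r = N − 1 are pairwise distinct and each gives a state SLOCC-equivalent to GHZ_n. -/

import Mathlib

open scoped BigOperators

noncomputable section

/-- `bit n i x` is the i-th binary digit of `x`, counted from the most significant. -/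
def bit (n : ℕ) (i : Fin n) (x : Fin (2^n)) : Fin 2 :=
  ⟨((x : ℕ) / 2^(n - 1 - (i : ℕ))) % 2, Nat.mod_lt _ (by norm_num)⟩

/-- An n-qubit state is separable if its amplitudes factor as a product over the qubits. -/
def Separable (n : ℕ) (ψ : Fin (2^n) → ℂ) : Prop :=
  ∃ v : Fin n → Fin 2 → ℂ, ∀ x, ψ x = ∏ i, v i (bit n i x)

/-- The periodic state with shift `l` and period `r`:
amplitude `1/√A` at `x = l + i·r` for `0 ≤ i < A`, with `A = ⌈(2^n - l)/r⌉`. -/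
def periodicState (n l r : ℕ) : Fin (2^n) → ℂ := fun x =>
  if ∃ i < (2^n - l + r - 1) / r, (x : ℕ) = l + i * r
  then (1 : ℂ) / Real.sqrt (((2^n - l + r - 1) / r : ℕ)) else 0

/-- Quantum Fourier transform of an n-qubit state. -/
def QFT (n : ℕ) (ψ : Fin (2^n) → ℂ) : Fin (2^n) → ℂ := fun y =>
  (1 / (Real.sqrt (2^n) : ℝ) : ℂ) * ∑ x : Fin (2^n),
    Complex.exp (2 * Real.pi * Complex.I * (x : ℕ) * (y : ℕ) / ((2^n : ℕ) : ℂ)) * ψ x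

/-- The generalized GHZ state. -/
def GHZ (n : ℕ) : Fin (2^n) → ℂ := fun x =>
  if (x : ℕ) = 0 ∨ (x : ℕ) = 2^n - 1 then (1 : ℂ) / Real.sqrt 2 else 0

/-- SLOCC equivalence of two n-qubit states. -/
def SLOCCEquiv (n : ℕ) (ψ φ : Fin (2^n) → ℂ) : Prop :=
  ∃ (g : Fin n → Matrix (Fin 2) (Fin 2) ℂ) (c : ℂ),
    c ≠ 0 ∧ (∀ i, IsUnit (g i)) ∧
    ∀ x, φ x = c * ∑ y : Fin (2^n), (∏ i, g i (bit n i x) (bit n i y)) * ψ y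

/-!
Each of these periodic states is a sum `a • ⊗ᵢ vᵢ + b • ⊗ᵢ wᵢ` of two product states with `vᵢ, wᵢ`
linearly independent on every qubit: for `(1, 1)` it is the all-ones state minus `|0…0⟩`; for
`(2^(n-1) - 1, 1)` it is the upper half of the indices (leading qubit `1`) plus the basis state
`|2^(n-1) - 1⟩`; on the anti-diagonal it is `|k⟩ + |2^n - 1 - k⟩`, two basis states with
complementary bit strings. The local operator sending `vᵢ ↦ e₀` and `wᵢ ↦ μ e₁`, where
`μ^n = a / b`, maps such a state to a multiple of `|0…0⟩ + |1…1⟩`.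
-/

open Matrix

lemma bit_eq_one_iff_testBit (n : ℕ) (i : Fin n) (x : Fin (2^n)) :
    bit n i x = 1 ↔ (x : ℕ).testBit (n - 1 - i) := by
  rw [Fin.ext_iff, show (bit n i x : ℕ) = _ from (Nat.toNat_testBit _ _).symm]
  cases (x : ℕ).testBit (n - 1 - i) <;> simp

def bitsEquiv (n : ℕ) : Fin (2^n) ≃ (Fin n → Fin 2) :=
  finFunctionFinEquiv.symm.trans (Equiv.arrowCongr Fin.revPerm (Equiv.refl _))

@[simp]
lemma bitsEquiv_apply (n : ℕ) (x : Fin (2^n)) (i : Fin n) : bitsEquiv n x i = bit n i x := by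
  apply Fin.ext
  simp [bitsEquiv, bit, finFunctionFinEquiv_symm_apply_val, Fin.val_rev, Nat.sub_sub,
    Nat.add_comm]

lemma sum_prod_bit (n : ℕ) (f : Fin n → Fin 2 → ℂ) :
    ∑ y : Fin (2^n), ∏ i, f i (bit n i y) = ∏ i, ∑ b, f i b := by
  rw [Fintype.prod_sum, ← (bitsEquiv n).sum_comp]
  simp

lemma bit_injective (n : ℕ) : Function.Injective fun (x : Fin (2^n)) i => bit n i x := by
  intro x y h
  exact (bitsEquiv n).injective (funext fun i => by simpa using congrFun h i)

lemma bit_of_val_eq_zero {n : ℕ} (i : Fin n) {x : Fin (2^n)} (hx : (x : ℕ) = 0) :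
    bit n i x = 0 := by
  apply Fin.ext; simp [bit, hx]

lemma bit_of_val_eq_two_pow_sub_one {n : ℕ} (i : Fin n) {x : Fin (2^n)}
    (hx : (x : ℕ) = 2^n - 1) : bit n i x = 1 := by
  rw [bit_eq_one_iff_testBit, hx, Nat.testBit_two_pow_sub_one, decide_eq_true_eq]
  omega

lemma bit_of_val_eq_two_pow_pred_sub_one {n : ℕ} (i : Fin n) {x : Fin (2^n)}
    (hx : (x : ℕ) = 2^(n - 1) - 1) : bit n i x = if (i : ℕ) = 0 then 0 else 1 := by
  have hi := i.isLt
  split_ifs with h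
  · apply Fin.ext; simp [bit, hx, h, Nat.div_eq_of_lt (Nat.sub_lt (Nat.two_pow_pos _) one_pos)]
  · rw [bit_eq_one_iff_testBit, hx, Nat.testBit_two_pow_sub_one, decide_eq_true_eq]
    omega

lemma bit_of_val_add_val_eq {n : ℕ} (i : Fin n) {x y : Fin (2^n)}
    (hxy : (x : ℕ) + y = 2^n - 1) : bit n i y = bit n i x + 1 := by
  have hy : (y : ℕ) = 2^n - ((x : ℕ) + 1) := by omega
  have hbit := bit_eq_one_iff_testBit n i y
  rw [hy, Nat.testBit_two_pow_sub_succ x.isLt, decide_eq_true (by omega), Bool.true_and,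
    Bool.not_eq_true', ← Bool.not_eq_true, ← bit_eq_one_iff_testBit] at hbit
  rcases Fin.exists_fin_two.mp ⟨bit n i x, rfl⟩ with hx | hx <;>
    rcases Fin.exists_fin_two.mp ⟨bit n i y, rfl⟩ with hy | hy <;>
    simp_all

lemma bit_zero_eq_one_iff {n : ℕ} (hn : 0 < n) (x : Fin (2^n)) :
    bit n ⟨0, hn⟩ x = 1 ↔ 2^(n - 1) ≤ (x : ℕ) := by
  have hx : (x : ℕ) < 2^(n - 1) * 2 := by rw [← pow_succ, Nat.sub_add_cancel hn]; exact x.isLt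
  have hd := Nat.div_lt_of_lt_mul hx
  rw [Fin.ext_iff]
  simp only [bit, Nat.sub_zero, Fin.val_one, Nat.mod_eq_of_lt hd]
  have := Nat.one_le_div_iff (Nat.two_pow_pos (n - 1)) (a := x)
  omega

def productState (n : ℕ) (v : Fin n → Fin 2 → ℂ) : Fin (2^n) → ℂ :=
  fun x => ∏ i, v i (bit n i x)

/-- The operator `⊗ᵢ gᵢ` on `n` qubits, as a `2^n × 2^n` matrix. -/
def localMatrix (n : ℕ) (g : Fin n → Matrix (Fin 2) (Fin 2) ℂ) :
    Matrix (Fin (2^n)) (Fin (2^n)) ℂ :=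
  Matrix.of fun x y => ∏ i, g i (bit n i x) (bit n i y)

lemma sloccEquiv_of_eq_smul_mulVec {n : ℕ} {ψ φ : Fin (2^n) → ℂ}
    (g : Fin n → Matrix (Fin 2) (Fin 2) ℂ) (hg : ∀ i, IsUnit (g i)) {c : ℂ} (hc : c ≠ 0)
    (h : φ = c • localMatrix n g *ᵥ ψ) : SLOCCEquiv n ψ φ :=
  ⟨g, c, hc, hg, fun x => by rw [h]; rfl⟩

lemma localMatrix_mulVec_productState (n : ℕ) (g : Fin n → Matrix (Fin 2) (Fin 2) ℂ)
    (v : Fin n → Fin 2 → ℂ) :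
    localMatrix n g *ᵥ productState n v = productState n fun i => g i *ᵥ v i := by
  ext x
  simp only [mulVec, dotProduct, localMatrix, productState, of_apply, ← Finset.prod_mul_distrib]
  exact sum_prod_bit n fun i b => g i (bit n i x) b * v i b

lemma productState_smul (n : ℕ) (c : Fin n → ℂ) (v : Fin n → Fin 2 → ℂ) :
    productState n (fun i => c i • v i) = (∏ i, c i) • productState n v := by
  ext x
  simp [productState, Finset.prod_mul_distrib]

lemma productState_single_bit {n : ℕ} (a x : Fin (2^n)) :
    productState n (fun i => Pi.single (bit n i a) 1) x = if x = a then 1 else 0 := by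
  simp only [productState, Pi.single_apply, Fintype.prod_boole, ← funext_iff,
    (bit_injective n).eq_iff]

lemma productState_single_zero {n : ℕ} (x : Fin (2^n)) :
    productState n (fun _ => Pi.single 0 1) x = if (x : ℕ) = 0 then 1 else 0 := by
  have hbit : ∀ i, bit n i ⟨0, Nat.two_pow_pos n⟩ = 0 := fun i => bit_of_val_eq_zero i rfl
  simpa only [hbit, Fin.ext_iff] using productState_single_bit ⟨0, Nat.two_pow_pos n⟩ x

lemma productState_single_one {n : ℕ} (x : Fin (2^n)) :
    productState n (fun _ => Pi.single 1 1) x = if (x : ℕ) = 2^n - 1 then 1 else 0 := by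
  let top : Fin (2^n) := ⟨2^n - 1, Nat.sub_lt (Nat.two_pow_pos n) one_pos⟩
  have hbit : ∀ i, bit n i top = 1 := fun i => bit_of_val_eq_two_pow_sub_one i rfl
  simpa only [hbit, Fin.ext_iff] using productState_single_bit top x

lemma GHZ_eq_smul_add {n : ℕ} (hn : 0 < n) :
    GHZ n = (1 / Real.sqrt 2 : ℂ) •
      (productState n (fun _ => Pi.single 0 1) + productState n (fun _ => Pi.single 1 1)) := by
  have h2 : 2 ≤ 2^n := Nat.le_self_pow hn.ne' 2
  ext x
  simp only [GHZ, Pi.smul_apply, Pi.add_apply, productState_single_zero,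
    productState_single_one, smul_eq_mul]
  split_ifs <;> first | omega | simp_all

theorem sloccEquiv_GHZ_of_eq_add_productState {n : ℕ} (hn : 0 < n) {ψ : Fin (2^n) → ℂ}
    {a b : ℂ} (ha : a ≠ 0) (hb : b ≠ 0) (v w : Fin n → Fin 2 → ℂ)
    (hvw : ∀ i, (Matrix.of ![v i, w i]).det ≠ 0)
    (hψ : ψ = a • productState n v + b • productState n w) :
    SLOCCEquiv n ψ (GHZ n) := by
  obtain ⟨μ, hμ⟩ := IsAlgClosed.exists_pow_nat_eq (a / b) hn
  have hμ0 : μ ≠ 0 := by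
    rintro rfl
    rw [zero_pow hn.ne'] at hμ
    exact div_ne_zero ha hb hμ.symm
  set M : Fin n → Matrix (Fin 2) (Fin 2) ℂ := fun i => (Matrix.of ![v i, w i])ᵀ
  have hM : ∀ i, IsUnit (M i).det := fun i => by simpa [M, det_transpose] using hvw i
  have hinv : ∀ i j, (M i)⁻¹ *ᵥ (M i *ᵥ Pi.single j 1) = Pi.single j 1 := fun i j => by
    rw [mulVec_mulVec, nonsing_inv_mul _ (hM i), one_mulVec]
  set g : Fin n → Matrix (Fin 2) (Fin 2) ℂ := fun i => diagonal ![1, μ] * (M i)⁻¹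
  have hg : ∀ i, IsUnit (g i) := fun i => by
    rw [isUnit_iff_isUnit_det, det_mul, det_diagonal, IsUnit.mul_iff]
    exact ⟨by simp [Fin.prod_univ_two, hμ0], isUnit_nonsing_inv_det _ (hM i)⟩
  have hv : ∀ i, g i *ᵥ v i = Pi.single 0 1 := fun i => by
    have hcol : M i *ᵥ Pi.single 0 1 = v i := by rw [mulVec_single_one]; rfl
    rw [← mulVec_mulVec, ← hcol, hinv, diagonal_mulVec_single]
    simp
  have hw : ∀ i, g i *ᵥ w i = μ • Pi.single 1 1 := fun i => by
    have hcol : M i *ᵥ Pi.single 1 1 = w i := by rw [mulVec_single_one]; rfl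
    rw [← mulVec_mulVec, ← hcol, hinv, diagonal_mulVec_single]
    ext j; fin_cases j <;> simp
  have hsqrt2 : (Real.sqrt 2 : ℂ) ≠ 0 := by simp
  have hgψ : localMatrix n g *ᵥ ψ = (a * Real.sqrt 2) • GHZ n := by
    rw [hψ, mulVec_add, mulVec_smul, mulVec_smul, localMatrix_mulVec_productState,
      localMatrix_mulVec_productState, funext hv, funext hw, productState_smul,
      Finset.prod_const, Finset.card_univ, Fintype.card_fin, hμ, smul_smul,
      mul_div_cancel₀ _ hb, GHZ_eq_smul_add hn, smul_smul, mul_assoc,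
      mul_one_div_cancel hsqrt2, mul_one, smul_add]
  have hc : a * Real.sqrt 2 ≠ 0 := mul_ne_zero ha hsqrt2
  refine sloccEquiv_of_eq_smul_mulVec g hg (inv_ne_zero hc) ?_
  rw [hgψ, smul_smul, inv_mul_cancel₀ hc, one_smul]

lemma periodicState_period_one (n l : ℕ) (x : Fin (2^n)) :
    periodicState n l 1 x =
      if l ≤ (x : ℕ) then 1 / (Real.sqrt ((2^n - l : ℕ) : ℝ) : ℂ) else 0 := by
  have hx := x.isLt
  have hsupp : (∃ i < 2^n - l, (x : ℕ) = l + i * 1) ↔ l ≤ x :=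
    ⟨fun ⟨i, _, hi⟩ => by omega, fun h => ⟨x - l, by omega, by omega⟩⟩
  simp only [periodicState, Nat.add_sub_cancel, Nat.div_one, hsupp]

lemma periodicState_antidiagonal {n k : ℕ} (hk : 3 * k + 2 ≤ 2^n) (x : Fin (2^n)) :
    periodicState n k (2^n - 1 - 2 * k) x =
      if (x : ℕ) = k ∨ (x : ℕ) = 2^n - 1 - k then 1 / (Real.sqrt 2 : ℂ) else 0 := by
  have hA : (2^n - k + (2^n - 1 - 2 * k) - 1) / (2^n - 1 - 2 * k) = 2 := by
    rw [show 2^n - k + (2^n - 1 - 2 * k) - 1 = (2^n - 1 - 2 * k) * 2 + k by omega,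
      Nat.mul_add_div (by omega), Nat.div_eq_of_lt (by omega)]
  have hsupp : (∃ i < 2, (x : ℕ) = k + i * (2^n - 1 - 2 * k)) ↔
      (x : ℕ) = k ∨ (x : ℕ) = 2^n - 1 - k := by
    constructor
    · rintro ⟨i, hi, hx⟩
      interval_cases i <;> omega
    · rintro (hx | hx)
      exacts [⟨0, by omega, by omega⟩, ⟨1, by omega, by omega⟩]
  simp only [periodicState, hA, hsupp, Nat.cast_ofNat]

theorem sloccEquiv_periodicState_one_one_GHZ {n : ℕ} (hn : 0 < n) :
    SLOCCEquiv n (periodicState n 1 1) (GHZ n) := by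
  have hN : 2 ≤ 2^n := Nat.le_self_pow hn.ne' 2
  set a : ℂ := 1 / (Real.sqrt ((2^n - 1 : ℕ) : ℝ) : ℂ)
  have ha : a ≠ 0 := by
    have : (2 : ℝ) ≤ 2^n := by exact_mod_cast hN
    simpa [a, Real.sqrt_ne_zero'] using (by linarith : (0 : ℝ) < 2^n - 1)
  refine sloccEquiv_GHZ_of_eq_add_productState hn ha (neg_ne_zero.mpr ha) (fun _ _ => 1)
    (fun _ => Pi.single 0 1) (fun i => by simp [det_fin_two]) ?_
  ext x
  simp only [periodicState_period_one, Pi.add_apply, Pi.smul_apply, smul_eq_mul,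
    productState_single_zero]
  simp only [productState, Finset.prod_const_one]
  split_ifs <;> first | omega | ring

theorem sloccEquiv_periodicState_half_sub_one_one_GHZ {n : ℕ} (hn : 0 < n) :
    SLOCCEquiv n (periodicState n (2^(n - 1) - 1) 1) (GHZ n) := by
  have hN : 2^n = 2 * 2^(n - 1) := (mul_pow_sub_one hn.ne' 2).symm
  have hM : 1 ≤ 2^(n - 1) := Nat.one_le_two_pow
  set x₀ : Fin (2^n) := ⟨2^(n - 1) - 1, by omega⟩
  set a : ℂ := 1 / (Real.sqrt ((2^n - (2^(n - 1) - 1) : ℕ) : ℝ) : ℂ)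
  have ha : a ≠ 0 := by
    simp only [a, one_div, ne_eq, inv_eq_zero, Complex.ofReal_eq_zero, Real.sqrt_eq_zero',
      not_le, Nat.cast_pos]
    omega
  set v : Fin n → Fin 2 → ℂ := fun i => if (i : ℕ) = 0 then Pi.single 1 1 else 1
  have hv : ∀ x, productState n v x = if 2^(n - 1) ≤ (x : ℕ) then 1 else 0 := fun x => by
    rw [productState, Fintype.prod_eq_single ⟨0, hn⟩ fun i hi => by
      simp [v, Fin.ext_iff.not.mp hi]]
    simp only [v, if_true, Pi.single_apply, ← bit_zero_eq_one_iff hn]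
  refine sloccEquiv_GHZ_of_eq_add_productState hn ha ha v (fun i => Pi.single (bit n i x₀) 1)
    (fun i => ?_) ?_
  · rw [bit_of_val_eq_two_pow_pred_sub_one i rfl]
    by_cases hi : (i : ℕ) = 0 <;> simp [v, hi, det_fin_two]
  · ext x
    simp only [periodicState_period_one, Pi.add_apply, Pi.smul_apply, smul_eq_mul, hv,
      productState_single_bit, Fin.ext_iff, x₀, a]
    split_ifs <;> first | omega | ring

theorem sloccEquiv_periodicState_antidiagonal_GHZ {n k : ℕ} (hk : 3 * k + 2 ≤ 2^n) :
    SLOCCEquiv n (periodicState n k (2^n - 1 - 2 * k)) (GHZ n) := by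
  have hn : 0 < n := Nat.pos_of_ne_zero (by rintro rfl; omega)
  set x₀ : Fin (2^n) := ⟨k, by omega⟩
  set x₁ : Fin (2^n) := ⟨2^n - 1 - k, by omega⟩
  have hx₁ : ∀ i, bit n i x₁ = bit n i x₀ + 1 := fun i =>
    bit_of_val_add_val_eq i (show k + (2^n - 1 - k) = 2^n - 1 by omega)
  have ha : 1 / (Real.sqrt 2 : ℂ) ≠ 0 := by simp
  refine sloccEquiv_GHZ_of_eq_add_productState hn ha ha (fun i => Pi.single (bit n i x₀) 1)
    (fun i => Pi.single (bit n i x₁) 1) (fun i => ?_) ?_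
  · rw [hx₁]
    rcases Fin.exists_fin_two.mp ⟨bit n i x₀, rfl⟩ with h | h <;> simp [h, det_fin_two]
  · ext x
    simp only [periodicState_antidiagonal hk, Pi.add_apply, Pi.smul_apply, smul_eq_mul,
      productState_single_bit, Fin.ext_iff, x₀, x₁]
    split_ifs <;> first | omega | ring

def ghzPairs (n : ℕ) : Finset (ℕ × ℕ) :=
  {(1, 1), (2^(n-1) - 1, 1)} ∪
    (Finset.range ((2^n - 2) / 3 + 1)).image (fun k => (k, 2^n - 1 - 2*k))

lemma mem_antidiagonal_image_iff {n : ℕ} (hn : 0 < n) {p : ℕ × ℕ} :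
    p ∈ (Finset.range ((2^n - 2) / 3 + 1)).image (fun k => (k, 2^n - 1 - 2*k)) ↔
      ∃ k, 3 * k + 2 ≤ 2^n ∧ p = (k, 2^n - 1 - 2 * k) := by
  simp only [Finset.mem_image, Finset.mem_range, eq_comm (a := p)]
  have : 2 ≤ 2^n := Nat.le_self_pow hn.ne' 2
  exact exists_congr fun k => and_congr_left fun _ => by omega

lemma card_ghzPairs {n : ℕ} (hn : 3 ≤ n) : (ghzPairs n).card = (2^n - 2) / 3 + 3 := by
  have hN : 2^n = 2 * 2^(n - 1) := (mul_pow_sub_one (by omega) 2).symm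
  have hM : 4 ≤ 2^(n - 1) := Nat.pow_le_pow_right two_pos (by omega : 2 ≤ n - 1)
  rw [ghzPairs, Finset.card_union_of_disjoint, Finset.card_pair, Finset.card_image_of_injective,
    Finset.card_range]
  · omega
  · exact fun k k' h => (Prod.mk.inj h).1
  · simp only [ne_eq, Prod.mk.injEq, and_true]
    omega
  · simp only [Finset.disjoint_insert_left, Finset.disjoint_singleton_left,
      mem_antidiagonal_image_iff (by omega : 0 < n)]
    constructor <;> rintro ⟨k, hk, hp⟩ <;> simp only [Prod.mk.injEq] at hp <;> omega

/-- there are at least `⌊(N−2)/3⌋ + 3` pairs `(l,r)` giving periodic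
states SLOCC-equivalent to `GHZ_n`: `(1,1)`, `(N/2−1,1)` and the anti-diagonal
pairs `(k, N−1−2k)` for `0 ≤ k ≤ ⌊(N−2)/3⌋`. -/
theorem stmt_11 (n : ℕ) (hn : 3 ≤ n) :
    (2^n - 2) / 3 + 3 ≤
      ((({(1, 1), (2^(n-1) - 1, 1)} : Finset (ℕ × ℕ)) ∪
        (Finset.range ((2^n - 2) / 3 + 1)).image (fun k => (k, 2^n - 1 - 2*k)))).card ∧
    ∀ p ∈ (({(1, 1), (2^(n-1) - 1, 1)} : Finset (ℕ × ℕ)) ∪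
        (Finset.range ((2^n - 2) / 3 + 1)).image (fun k => (k, 2^n - 1 - 2*k))),
      p.1 < 2^n ∧ 1 ≤ p.2 ∧ p.2 < 2^n ∧
        SLOCCEquiv n (periodicState n p.1 p.2) (GHZ n) := by
  have hn0 : 0 < n := by omega
  have hN : 2^n = 2 * 2^(n - 1) := (mul_pow_sub_one hn0.ne' 2).symm
  have hM : 1 ≤ 2^(n - 1) := Nat.one_le_two_pow
  refine ⟨(card_ghzPairs hn).ge, fun p hp => ?_⟩
  rw [Finset.mem_union, Finset.mem_insert, Finset.mem_singleton,
    mem_antidiagonal_image_iff hn0] at hp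
  rcases hp with (rfl | rfl) | ⟨k, hk, rfl⟩
  · exact ⟨by omega, le_rfl, by omega, sloccEquiv_periodicState_one_one_GHZ hn0⟩
  · exact ⟨by omega, le_rfl, by omega, sloccEquiv_periodicState_half_sub_one_one_GHZ hn0⟩
  · exact ⟨by omega, by omega, by omega, sloccEquiv_periodicState_antidiagonal_GHZ hk⟩
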